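/- arXiv:1302.7055 — 3 statements merged into one kernel-verified Lean document; each statement's English description precedes it below -/
import Mathlib

section
/- For every integer i ≥ 1, with H = 3i + 4 and ε = (3i² + 3i)/2, one has 6(ε - 1) - (H - 6)(H + 1) = 4; moreover for all other values of ε ≥ 1 with largest embedding complete graph K_{H(ε)} (i.e., ε in the ranges of Lemma 2.3 not equal to (3i²+3i)/2 with H(ε) = 3i+4), one has 6(ε - 1) - (H(ε) - 6)(H(ε) + 1) ≤ 0. -/
/-- The Heawood number `H(ε) = ⌊(7 + √(24ε + 1))/2⌋`. -/
noncomputable def heawood (ε : ℤ) : ℤ := ⌊(7 + Real.sqrt (24 * (ε : ℝ) + 1)) / 2⌋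

lemma heawood_eq (ε H : ℤ) (hH : 4 ≤ H)
    (h1 : (2 * H - 7) ^ 2 ≤ 24 * ε + 1) (h2 : 24 * ε + 1 < (2 * H - 5) ^ 2) :
    heawood ε = H := by
  have hHr : (4 : ℝ) ≤ (H : ℝ) := by exact_mod_cast hH
  have h1r : (2 * (H : ℝ) - 7) ^ 2 ≤ 24 * (ε : ℝ) + 1 := by exact_mod_cast h1
  have h2r : 24 * (ε : ℝ) + 1 < (2 * (H : ℝ) - 5) ^ 2 := by exact_mod_cast h2
  have h0 : (0 : ℝ) ≤ 2 * (H : ℝ) - 7 := by linarith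
  have hx : (0 : ℝ) ≤ 24 * (ε : ℝ) + 1 := le_trans (sq_nonneg _) h1r
  have hs1 : (2 * (H : ℝ) - 7) ≤ Real.sqrt (24 * (ε : ℝ) + 1) := by
    rw [show (2 * (H : ℝ) - 7) = Real.sqrt ((2 * (H : ℝ) - 7) ^ 2) by
      rw [Real.sqrt_sq h0]]
    exact Real.sqrt_le_sqrt h1r
  have hs2 : Real.sqrt (24 * (ε : ℝ) + 1) < 2 * (H : ℝ) - 5 := by
    have h5 : (0 : ℝ) < 2 * (H : ℝ) - 5 := by linarith
    rw [show (2 * (H : ℝ) - 5) = Real.sqrt ((2 * (H : ℝ) - 5) ^ 2) by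
      rw [Real.sqrt_sq (le_of_lt h5)]]
    exact Real.sqrt_lt_sqrt hx h2r
  unfold heawood
  rw [Int.floor_eq_iff]
  constructor
  · linarith
  · linarith

/-- In the Special Cases `H = 3i + 4`, `ε = (3i² + 3i)/2`, the quantity
`6(ε - 1) - (H - 6)(H + 1)` equals `4`; in all the other ranges of Lemma 2.3
(stated with doubled inequalities, the numerators being even) it is at most `0`. -/
theorem special_case_bound :
    (∀ i ε : ℤ, 1 ≤ i → 2 * ε = 3 * i ^ 2 + 3 * i →
      6 * (ε - 1) - ((3 * i + 4) - 6) * ((3 * i + 4) + 1) = 4) ∧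
    (∀ i ε : ℤ, 1 ≤ i →
      ((3 * i ^ 2 - i ≤ 2 * ε ∧ 2 * ε ≤ 3 * i ^ 2 + i - 2) ∨
       (3 * i ^ 2 + i ≤ 2 * ε ∧ 2 * ε ≤ 3 * i ^ 2 + 3 * i ∧ 2 * ε ≠ 3 * i ^ 2 + 3 * i) ∨
       (3 * i ^ 2 + 3 * i + 2 ≤ 2 * ε ∧ 2 * ε ≤ 3 * i ^ 2 + 5 * i)) →
      6 * (ε - 1) - (heawood ε - 6) * (heawood ε + 1) ≤ 0) := by
  constructor
  · intro i ε hi hε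
    linarith
  · intro i ε hi hcase
    rcases hcase with ⟨h1, h2⟩ | ⟨h1, h2, h3⟩ | ⟨h1, h2⟩
    · have hH : heawood ε = 3 * i + 3 := by
        apply heawood_eq <;> nlinarith
      rw [hH]; nlinarith
    · have h2' : 2 * ε < 3 * i ^ 2 + 3 * i := lt_of_le_of_ne h2 h3
      have hH : heawood ε = 3 * i + 4 := by
        apply heawood_eq <;> nlinarith
      rw [hH]
      -- parity: 2ε even, 3i²+3i even, so 2ε ≤ 3i²+3i-2
      obtain ⟨k, hk⟩ := Int.even_mul_succ_self i
      have hk2 : i ^ 2 + i = k + k := by nlinarith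
      have hpar : 2 * ε ≤ 3 * i ^ 2 + 3 * i - 2 := by omega
      nlinarith
    · have hH : heawood ε = 3 * i + 5 := by
        apply heawood_eq <;> nlinarith
      rw [hH]; nlinarith
end

section
/- Let G be a simple graph on k vertices, k ≥ 3, with a list assignment L such that |L(v)| ≥ k - 2 for every vertex v. If at most k - 2 vertices of G have degree at least k - 2, then G admits a proper L-coloring. -/
/-!
Color greedily, always removing a vertex with fewer neighbours among the remaining ones than
colors in its list and coloring it last. Such a vertex always exists: a vertex of degree
`< k - 2` qualifies, and if none remains, the remaining vertices all have degree `≥ k - 2`,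
so there are at most `k - 2` of them and each has fewer than `k - 2` neighbours among them.
-/

open Finset SimpleGraph

namespace SimpleGraph

variable {V α : Type*} (G : SimpleGraph V)

def IsListColoringOn (L : V → Finset α) (s : Finset V) (c : V → α) : Prop :=
  (∀ v ∈ s, c v ∈ L v) ∧ ∀ u ∈ s, ∀ v ∈ s, G.Adj u v → c u ≠ c v

variable {G} [DecidableRel G.Adj]

theorem card_filter_adj_le_degree {v : V} [Fintype (G.neighborSet v)] (t : Finset V) :
    #{w ∈ t | G.Adj v w} ≤ G.degree v := by
  rw [← card_neighborFinset_eq_degree]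
  exact card_le_card fun w hw => (mem_neighborFinset ..).2 (mem_filter.1 hw).2

theorem card_filter_adj_lt_card {t : Finset V} {v : V} (hv : v ∈ t) :
    #{w ∈ t | G.Adj v w} < #t :=
  card_lt_card <| filter_ssubset.2 ⟨v, hv, G.irrefl⟩

theorem IsListColoringOn.exists_insert [DecidableEq V] {L : V → Finset α} {s : Finset V}
    {c : V → α} (hc : G.IsListColoringOn L s c) {v : V} (hv : #{w ∈ s | G.Adj v w} < #(L v)) :
    ∃ c', G.IsListColoringOn L (insert v s) c' := by
  classical
  obtain ⟨x, hxL, hx⟩ : ∃ x ∈ L v, x ∉ image c {w ∈ s | G.Adj v w} :=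
    exists_mem_notMem_of_card_lt_card (card_image_le.trans_lt hv)
  have hx' : ∀ w ∈ s, G.Adj v w → x ≠ c w := fun w hw hvw h =>
    hx (mem_image.2 ⟨w, mem_filter.2 ⟨hw, hvw⟩, h.symm⟩)
  refine ⟨Function.update c v x, fun w hw => ?_, fun u hu w hw huw => ?_⟩
  · rcases eq_or_ne w v with rfl | hwv
    · simpa using hxL
    · simpa [hwv] using hc.1 w ((mem_insert.1 hw).resolve_left hwv)
  · have hu' := mem_insert.1 hu
    have hw' := mem_insert.1 hw
    rcases eq_or_ne u v with rfl | huv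
    · simpa [huw.ne'] using hx' w (hw'.resolve_left huw.ne') huw
    rcases eq_or_ne w v with rfl | hwv
    · simpa [huv] using (hx' u (hu'.resolve_left huv) huw.symm).symm
    simpa [huv, hwv] using hc.2 u (hu'.resolve_left huv) w (hw'.resolve_left hwv) huw

theorem exists_isListColoringOn_of_forall_exists_card_lt [DecidableEq V] [Nonempty α]
    (L : V → Finset α) (s : Finset V)
    (h : ∀ t ⊆ s, t.Nonempty → ∃ v ∈ t, #{w ∈ t | G.Adj v w} < #(L v)) :
    ∃ c, G.IsListColoringOn L s c := by
  induction s using Finset.strongInduction with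
  | H s ih =>
    rcases s.eq_empty_or_nonempty with rfl | hs
    · exact ⟨fun _ => Classical.arbitrary α, by simp [IsListColoringOn]⟩
    obtain ⟨v, hv, hvL⟩ := h s subset_rfl hs
    obtain ⟨c, hc⟩ := ih (s.erase v) (erase_ssubset hv)
      fun t ht => h t (ht.trans (erase_subset v s))
    have hvL' : #{w ∈ s.erase v | G.Adj v w} < #(L v) :=
      (card_le_card (filter_subset_filter _ (erase_subset v s))).trans_lt hvL
    simpa [insert_erase hv] using hc.exists_insert hvL'

end SimpleGraph

theorem list_colorable_of_few_high_degree_general {V : Type} [Fintype V]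
    (k : ℕ) (G : SimpleGraph V) [DecidableRel G.Adj]
    (L : V → Finset ℕ) (hL : ∀ v, k - 2 ≤ (L v).card)
    (hdeg : (Finset.univ.filter fun v => k - 2 ≤ G.degree v).card ≤ k - 2) :
    ∃ c : V → ℕ, (∀ v, c v ∈ L v) ∧ ∀ u v, G.Adj u v → c u ≠ c v := by
  classical
  have hremovable (t : Finset V) (ht : t.Nonempty) :
      ∃ v ∈ t, #{w ∈ t | G.Adj v w} < #(L v) := by
    by_cases hlow : ∃ v ∈ t, G.degree v < k - 2
    · obtain ⟨v, hv, hdv⟩ := hlow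
      exact ⟨v, hv, ((card_filter_adj_le_degree t).trans_lt hdv).trans_le (hL v)⟩
    · push Not at hlow
      obtain ⟨v, hv⟩ := ht
      have htk : #t ≤ k - 2 :=
        (card_le_card fun w hw => mem_filter.2 ⟨mem_univ w, hlow w hw⟩).trans hdeg
      exact ⟨v, hv, ((card_filter_adj_lt_card hv).trans_le htk).trans_le (hL v)⟩
  obtain ⟨c, hcL, hc⟩ :=
    G.exists_isListColoringOn_of_forall_exists_card_lt L univ fun t _ => hremovable t
  exact ⟨c, fun v => hcL v (mem_univ v), fun u v huv => hc u (mem_univ u) v (mem_univ v) huv⟩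

/-- If a simple graph on `k ≥ 3` vertices has lists of size at least `k - 2` on each
vertex and at most `k - 2` vertices of degree at least `k - 2`, then it has a proper
list coloring. -/
theorem list_colorable_of_few_high_degree {V : Type} [Fintype V] [DecidableEq V]
    (k : ℕ) (hk : 3 ≤ k) (G : SimpleGraph V) [DecidableRel G.Adj]
    (hcard : Fintype.card V = k)
    (L : V → Finset ℕ) (hL : ∀ v, k - 2 ≤ (L v).card)
    (hdeg : (Finset.univ.filter fun v => k - 2 ≤ G.degree v).card ≤ k - 2) :
    ∃ c : V → ℕ, (∀ v, c v ∈ L v) ∧ ∀ u v, G.Adj u v → c u ≠ c v :=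
  list_colorable_of_few_high_degree_general k G L hL hdeg
end

section
/- Let H ≥ 6 and let G be the graph K_H minus two independent edges ab and cd (a, b, c, d distinct). Then G equals the join of the 4-cycle (a, c, b, d) with K_{H-4}, and G is L-colorable whenever |L(v)| ≥ H - 2 for each vertex v. -/
lemma hall_aux {n : ℕ} (S : Finset (Fin n)) (L' : Fin n → Finset ℕ)
    (hall : ∀ s ⊆ S, s.card ≤ (s.biUnion L').card) :
    ∃ f : Fin n → ℕ, (∀ v ∈ S, f v ∈ L' v) ∧ ∀ u ∈ S, ∀ v ∈ S, u ≠ v → f u ≠ f v := by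
  classical
  have h : ∀ s : Finset {x : Fin n // x ∈ S}, s.card ≤ (s.biUnion fun x => L' x.1).card := by
    intro s
    have hmap : (s.map (Function.Embedding.subtype _)) ⊆ S := by
      intro x hx
      simp only [Finset.mem_map, Function.Embedding.coe_subtype] at hx
      obtain ⟨y, _, rfl⟩ := hx; exact y.2
    have hbu : (s.map (Function.Embedding.subtype _)).biUnion L' = s.biUnion fun x => L' x.1 := by
      ext y
      simp [Finset.mem_biUnion]
    calc s.card = (s.map (Function.Embedding.subtype _)).card := (Finset.card_map _).symm
      _ ≤ ((s.map (Function.Embedding.subtype _)).biUnion L').card := hall _ hmap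
      _ = _ := by rw [hbu]
  obtain ⟨f0, hinj, hf0⟩ := (Finset.all_card_le_biUnion_card_iff_exists_injective _).mp h
  refine ⟨fun v => if h : v ∈ S then f0 ⟨v, h⟩ else 0, ?_, ?_⟩
  · intro v hv; simpa [hv] using hf0 ⟨v, hv⟩
  · intro u hu v hv huv
    simp only [dif_pos hu, dif_pos hv]
    intro hEq
    exact huv (congrArg Subtype.val (hinj hEq))

lemma hall_cond {n : ℕ} (S : Finset (Fin n)) (L' : Fin n → Finset ℕ) (k : ℕ)
    (hsize : ∀ v ∈ S, k ≤ (L' v).card) (hScard : S.card ≤ k + k)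
    (hbig : ∀ s ⊆ S, k < s.card → ∃ x ∈ s, ∃ y ∈ s, x ≠ y ∧ Disjoint (L' x) (L' y)) :
    ∀ s ⊆ S, s.card ≤ (s.biUnion L').card := by
  intro s hs
  rcases le_or_gt s.card k with h | h
  · rcases s.eq_empty_or_nonempty with rfl | ⟨v, hv⟩
    · simp
    · calc s.card ≤ k := h
        _ ≤ (L' v).card := hsize v (hs hv)
        _ ≤ _ := Finset.card_le_card (Finset.subset_biUnion_of_mem _ hv)
  · obtain ⟨x, hx, y, hy, hxy, hdisj⟩ := hbig s hs h
    have hsub : L' x ∪ L' y ⊆ s.biUnion L' := Finset.union_subset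
      (Finset.subset_biUnion_of_mem _ hx) (Finset.subset_biUnion_of_mem _ hy)
    calc s.card ≤ S.card := Finset.card_le_card hs
      _ ≤ k + k := hScard
      _ ≤ (L' x).card + (L' y).card :=
          Nat.add_le_add (hsize x (hs hx)) (hsize y (hs hy))
      _ = (L' x ∪ L' y).card := (Finset.card_union_of_disjoint hdisj).symm
      _ ≤ _ := Finset.card_le_card hsub

set_option maxHeartbeats 1000000

/-- `K_H` minus two independent edges `ab`, `cd` equals the join of the `4`-cycle
`(a, c, b, d)` with the complete graph on the remaining `H - 4` vertices, and it is
`L`-colorable whenever every list has size at least `H - 2`. -/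
theorem complete_minus_two_edges (H : ℕ) (hH : 6 ≤ H) (a b c d : Fin H)
    (hab : a ≠ b) (hac : a ≠ c) (had : a ≠ d) (hbc : b ≠ c) (hbd : b ≠ d) (hcd : c ≠ d)
    (G : SimpleGraph (Fin H))
    (hG : ∀ u v, G.Adj u v ↔ u ≠ v ∧ s(u, v) ≠ s(a, b) ∧ s(u, v) ≠ s(c, d)) :
    (∀ u v, G.Adj u v ↔
      ((u ∈ ({a, b, c, d} : Set (Fin H)) ∧ v ∈ ({a, b, c, d} : Set (Fin H)) ∧
          s(u, v) ∈ ({s(a, c), s(c, b), s(b, d), s(d, a)} : Set (Sym2 (Fin H)))) ∨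
       (u ∉ ({a, b, c, d} : Set (Fin H)) ∧ v ∉ ({a, b, c, d} : Set (Fin H)) ∧ u ≠ v) ∨
       (u ∈ ({a, b, c, d} : Set (Fin H)) ∧ v ∉ ({a, b, c, d} : Set (Fin H))) ∨
       (u ∉ ({a, b, c, d} : Set (Fin H)) ∧ v ∈ ({a, b, c, d} : Set (Fin H))))) ∧
    (∀ L : Fin H → Finset ℕ, (∀ v, H - 2 ≤ (L v).card) →
      ∃ coloring : Fin H → ℕ, (∀ v, coloring v ∈ L v) ∧
        ∀ u v, G.Adj u v → coloring u ≠ coloring v) := by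
  constructor
  · intro u v
    rw [hG u v]
    simp only [Set.mem_insert_iff, Set.mem_singleton_iff, Sym2.eq_iff, ne_eq, not_or]
    by_cases hua : u = a <;> by_cases hub : u = b <;> by_cases huc : u = c <;>
      by_cases hud : u = d <;> by_cases hva : v = a <;> by_cases hvb : v = b <;>
      by_cases hvc : v = c <;> by_cases hvd : v = d <;>
      subst_vars <;> simp_all <;> tauto
  · intro L hL
    classical
    have hadj : ∀ u v, G.Adj u v → u ≠ v ∧ ¬((u = a ∧ v = b) ∨ (u = b ∧ v = a)) ∧
        ¬((u = c ∧ v = d) ∨ (u = d ∧ v = c)) := by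
      intro u v h
      rw [hG] at h
      exact ⟨h.1, fun hc => h.2.1 (Sym2.eq_iff.mpr hc), fun hc => h.2.2 (Sym2.eq_iff.mpr hc)⟩
    by_cases hab' : ∃ α, α ∈ L a ∩ L b
    · obtain ⟨α, hα⟩ := hab'
      rw [Finset.mem_inter] at hα
      by_cases hcd' : ∃ β, β ∈ ((L c).erase α) ∩ ((L d).erase α)
      · -- Case B1: color a=b=α, c=d=β, rainbow on the rest
        obtain ⟨β, hβ⟩ := hcd'
        rw [Finset.mem_inter] at hβ
        have hαβ : α ≠ β := fun h => (Finset.mem_erase.mp hβ.1).1 h.symm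
        set S : Finset (Fin H) := (((Finset.univ.erase a).erase b).erase c).erase d with hS
        have hmemS : ∀ v : Fin H, ¬(v = a ∨ v = b) → ¬(v = c ∨ v = d) → v ∈ S := by
          intro v h1 h2
          push_neg at h1 h2
          simp [hS, Finset.mem_erase, h1.1, h1.2, h2.1, h2.2]
        have cardS : S.card = H - 4 := by
          rw [hS, Finset.card_erase_of_mem (by simp [Finset.mem_erase, hcd.symm, hbd.symm, had.symm]),
            Finset.card_erase_of_mem (by simp [Finset.mem_erase, hbc.symm, hac.symm]),
            Finset.card_erase_of_mem (by simp [Finset.mem_erase, hab.symm]),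
            Finset.card_erase_of_mem (Finset.mem_univ a), Finset.card_univ, Fintype.card_fin]
          omega
        obtain ⟨g, hg, hginj⟩ := hall_aux S (fun v => ((L v).erase α).erase β)
          (hall_cond S _ (H - 4)
            (by
              intro v _
              have h0 := hL v
              have h1 := Finset.pred_card_le_card_erase (s := L v) (a := α)
              have h2 := Finset.pred_card_le_card_erase (s := (L v).erase α) (a := β)
              omega)
            (by omega)
            (by
              intro s hs hlt
              exfalso
              have := Finset.card_le_card hs
              omega))
        have hgα : ∀ v ∈ S, g v ≠ α := by
          intro v hv
          exact (Finset.mem_erase.mp (Finset.mem_of_mem_erase (hg v hv))).1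
        have hgβ : ∀ v ∈ S, g v ≠ β := by
          intro v hv
          exact (Finset.mem_erase.mp (hg v hv)).1
        refine ⟨fun v => if v = a ∨ v = b then α else if v = c ∨ v = d then β else g v, ?_, ?_⟩
        · intro v
          dsimp only
          by_cases h1 : v = a ∨ v = b
          · rw [if_pos h1]; rcases h1 with rfl | rfl
            · exact hα.1
            · exact hα.2
          · rw [if_neg h1]
            by_cases h2 : v = c ∨ v = d
            · rw [if_pos h2]; rcases h2 with rfl | rfl
              · exact Finset.mem_of_mem_erase hβ.1
              · exact Finset.mem_of_mem_erase hβ.2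
            · rw [if_neg h2]
              exact Finset.mem_of_mem_erase (Finset.mem_of_mem_erase (hg v (hmemS v h1 h2)))
        · intro u v huv
          obtain ⟨hne, hAB, hCD⟩ := hadj u v huv
          dsimp only
          by_cases h1 : u = a ∨ u = b
          · rw [if_pos h1]
            by_cases h2 : v = a ∨ v = b
            · exfalso
              rcases h1 with rfl | rfl <;> rcases h2 with rfl | rfl
              exacts [hne rfl, hAB (Or.inl ⟨rfl, rfl⟩), hAB (Or.inr ⟨rfl, rfl⟩), hne rfl]
            · rw [if_neg h2]
              by_cases h4 : v = c ∨ v = d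
              · rw [if_pos h4]; exact hαβ
              · rw [if_neg h4]
                exact fun hEq => hgα v (hmemS v h2 h4) hEq.symm
          · rw [if_neg h1]
            by_cases h3 : u = c ∨ u = d
            · rw [if_pos h3]
              by_cases h2 : v = a ∨ v = b
              · rw [if_pos h2]; exact hαβ.symm
              · rw [if_neg h2]
                by_cases h4 : v = c ∨ v = d
                · exfalso
                  rcases h3 with rfl | rfl <;> rcases h4 with rfl | rfl
                  exacts [hne rfl, hCD (Or.inl ⟨rfl, rfl⟩), hCD (Or.inr ⟨rfl, rfl⟩), hne rfl]
                · rw [if_neg h4]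
                  exact fun hEq => hgβ v (hmemS v h2 h4) hEq.symm
            · rw [if_neg h3]
              by_cases h2 : v = a ∨ v = b
              · rw [if_pos h2]; exact hgα u (hmemS u h1 h3)
              · rw [if_neg h2]
                by_cases h4 : v = c ∨ v = d
                · rw [if_pos h4]; exact hgβ u (hmemS u h1 h3)
                · rw [if_neg h4]
                  exact hginj u (hmemS u h1 h3) v (hmemS v h2 h4) hne
      · -- Case B2: color a=b=α, rainbow on the rest
        set S : Finset (Fin H) := (Finset.univ.erase a).erase b with hS
        have hmemS : ∀ v : Fin H, ¬(v = a ∨ v = b) → v ∈ S := by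
          intro v h1
          push_neg at h1
          simp [hS, Finset.mem_erase, h1.1, h1.2]
        have cardS : S.card = H - 2 := by
          rw [hS, Finset.card_erase_of_mem (by simp [Finset.mem_erase, hab.symm]),
            Finset.card_erase_of_mem (Finset.mem_univ a), Finset.card_univ, Fintype.card_fin]
          omega
        obtain ⟨g, hg, hginj⟩ := hall_aux S (fun v => (L v).erase α)
          (hall_cond S _ (H - 3)
            (by
              intro v _
              have h0 := hL v
              have h1 := Finset.pred_card_le_card_erase (s := L v) (a := α)
              omega)
            (by omega)
            (by
              intro s hs hlt
              have hsc : S.card ≤ s.card := by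
                have := Finset.card_le_card hs
                omega
              have hseq : s = S := Finset.eq_of_subset_of_card_le hs hsc
              subst hseq
              refine ⟨c, hmemS c (by tauto), d, hmemS d (by tauto), hcd, ?_⟩
              rw [Finset.disjoint_left]
              intro x hx hx'
              exact hcd' ⟨x, Finset.mem_inter.mpr ⟨hx, hx'⟩⟩))
        have hgα : ∀ v ∈ S, g v ≠ α := by
          intro v hv
          exact (Finset.mem_erase.mp (hg v hv)).1
        refine ⟨fun v => if v = a ∨ v = b then α else g v, ?_, ?_⟩
        · intro v
          dsimp only
          by_cases h1 : v = a ∨ v = b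
          · rw [if_pos h1]; rcases h1 with rfl | rfl
            · exact hα.1
            · exact hα.2
          · rw [if_neg h1]
            exact Finset.mem_of_mem_erase (hg v (hmemS v h1))
        · intro u v huv
          obtain ⟨hne, hAB, hCD⟩ := hadj u v huv
          dsimp only
          by_cases h1 : u = a ∨ u = b
          · rw [if_pos h1]
            by_cases h2 : v = a ∨ v = b
            · exfalso
              rcases h1 with rfl | rfl <;> rcases h2 with rfl | rfl
              exacts [hne rfl, hAB (Or.inl ⟨rfl, rfl⟩), hAB (Or.inr ⟨rfl, rfl⟩), hne rfl]
            · rw [if_neg h2]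
              exact fun hEq => hgα v (hmemS v h2) hEq.symm
          · rw [if_neg h1]
            by_cases h2 : v = a ∨ v = b
            · rw [if_pos h2]; exact hgα u (hmemS u h1)
            · rw [if_neg h2]
              exact hginj u (hmemS u h1) v (hmemS v h2) hne
    · have hdAB : Disjoint (L a) (L b) := by
        rw [Finset.disjoint_left]
        intro x hx hx'
        exact hab' ⟨x, Finset.mem_inter.mpr ⟨hx, hx'⟩⟩
      by_cases hcd' : ∃ β, β ∈ L c ∩ L d
      · -- Case C: color c=d=β, rainbow on the rest
        obtain ⟨β, hβ⟩ := hcd'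
        rw [Finset.mem_inter] at hβ
        set S : Finset (Fin H) := (Finset.univ.erase c).erase d with hS
        have hmemS : ∀ v : Fin H, ¬(v = c ∨ v = d) → v ∈ S := by
          intro v h1
          push_neg at h1
          simp [hS, Finset.mem_erase, h1.1, h1.2]
        have cardS : S.card = H - 2 := by
          rw [hS, Finset.card_erase_of_mem (by simp [Finset.mem_erase, hcd.symm]),
            Finset.card_erase_of_mem (Finset.mem_univ c), Finset.card_univ, Fintype.card_fin]
          omega
        obtain ⟨g, hg, hginj⟩ := hall_aux S (fun v => (L v).erase β)
          (hall_cond S _ (H - 3)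
            (by
              intro v _
              have h0 := hL v
              have h1 := Finset.pred_card_le_card_erase (s := L v) (a := β)
              omega)
            (by omega)
            (by
              intro s hs hlt
              have hsc : S.card ≤ s.card := by
                have := Finset.card_le_card hs
                omega
              have hseq : s = S := Finset.eq_of_subset_of_card_le hs hsc
              subst hseq
              refine ⟨a, hmemS a (by tauto), b, hmemS b (by tauto), hab, ?_⟩
              exact Finset.disjoint_of_subset_left (Finset.erase_subset _ _)
                (Finset.disjoint_of_subset_right (Finset.erase_subset _ _) hdAB)))
        have hgβ : ∀ v ∈ S, g v ≠ β := by
          intro v hv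
          exact (Finset.mem_erase.mp (hg v hv)).1
        refine ⟨fun v => if v = c ∨ v = d then β else g v, ?_, ?_⟩
        · intro v
          dsimp only
          by_cases h1 : v = c ∨ v = d
          · rw [if_pos h1]; rcases h1 with rfl | rfl
            · exact hβ.1
            · exact hβ.2
          · rw [if_neg h1]
            exact Finset.mem_of_mem_erase (hg v (hmemS v h1))
        · intro u v huv
          obtain ⟨hne, hAB, hCD⟩ := hadj u v huv
          dsimp only
          by_cases h1 : u = c ∨ u = d
          · rw [if_pos h1]
            by_cases h2 : v = c ∨ v = d
            · exfalso
              rcases h1 with rfl | rfl <;> rcases h2 with rfl | rfl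
              exacts [hne rfl, hCD (Or.inl ⟨rfl, rfl⟩), hCD (Or.inr ⟨rfl, rfl⟩), hne rfl]
            · rw [if_neg h2]
              exact fun hEq => hgβ v (hmemS v h2) hEq.symm
          · rw [if_neg h1]
            by_cases h2 : v = c ∨ v = d
            · rw [if_pos h2]; exact hgβ u (hmemS u h1)
            · rw [if_neg h2]
              exact hginj u (hmemS u h1) v (hmemS v h2) hne
      · -- Case A: rainbow coloring on everything
        have hdCD : Disjoint (L c) (L d) := by
          rw [Finset.disjoint_left]
          intro x hx hx'
          exact hcd' ⟨x, Finset.mem_inter.mpr ⟨hx, hx'⟩⟩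
        obtain ⟨g, hg, hginj⟩ := hall_aux Finset.univ L
          (hall_cond Finset.univ L (H - 2)
            (fun v _ => hL v)
            (by rw [Finset.card_univ, Fintype.card_fin]; omega)
            (by
              intro s hs hlt
              have key : ∀ x y : Fin H, x ≠ y → x ∉ s → y ∉ s → s.card ≤ H - 2 := by
                intro x y hxy hx hy
                have hsub : s ⊆ (Finset.univ.erase x).erase y := by
                  intro z hz
                  simp only [Finset.mem_erase, Finset.mem_univ, and_true]
                  exact ⟨fun h => hy (h ▸ hz), fun h => hx (h ▸ hz)⟩
                have h2 : ((Finset.univ.erase x).erase y).card = H - 2 := by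
                  rw [Finset.card_erase_of_mem (by simp [Finset.mem_erase, hxy.symm]),
                    Finset.card_erase_of_mem (Finset.mem_univ x), Finset.card_univ,
                    Fintype.card_fin]
                  omega
                have := Finset.card_le_card hsub
                omega
              by_cases hin : a ∈ s ∧ b ∈ s
              · exact ⟨a, hin.1, b, hin.2, hab, hdAB⟩
              · by_cases hin2 : c ∈ s ∧ d ∈ s
                · exact ⟨c, hin2.1, d, hin2.2, hcd, hdCD⟩
                · exfalso
                  rw [not_and_or] at hin hin2
                  rcases hin with hx | hx <;> rcases hin2 with hy | hy
                  · exact absurd (key a c hac hx hy) (by omega)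
                  · exact absurd (key a d had hx hy) (by omega)
                  · exact absurd (key b c hbc hx hy) (by omega)
                  · exact absurd (key b d hbd hx hy) (by omega)))
        exact ⟨g, fun v => hg v (Finset.mem_univ v), fun u v huv =>
          hginj u (Finset.mem_univ u) v (Finset.mem_univ v) (hadj u v huv).1⟩
end
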